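/- arXiv:2512.18282 — 2 statements merged into one kernel-verified Lean document; each statement's English description precedes it below -/
import Mathlib

section
/- For every complex number α and every natural number n ≥ 1: Σ_{k=0}^n C(n,k) H_k(α) = 2^n · ( H_n( (1 + α)/2 ) − H_n( 1/2 ) ). -/
/-!
Pascal's rule turns the binomial transform `S n = ∑ₖ C(n,k) H_k(α)` into the recursion
`S (n+1) = 2 S n + ∑ₖ C(n,k) α^(k+1)/(k+1) = 2 S n + ((1+α)^(n+1) - 1)/(n+1)`, the last sum
being the termwise integral of the binomial theorem. The right-hand side satisfies the same
recursion, since `2^(n+1) (((1+α)/2)^(n+1) - (1/2)^(n+1)) = (1+α)^(n+1) - 1`, and both vanish at `n = 0`.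
-/

open Finset

/-- The generalized harmonic number `H_n(α) = ∑_{k=1}^n α^k / k`. -/
noncomputable def genHarmonic (α : ℂ) (n : ℕ) : ℂ :=
  ∑ k ∈ Finset.Icc 1 n, α ^ k / (k : ℂ)

@[simp]
lemma genHarmonic_zero (α : ℂ) : genHarmonic α 0 = 0 := by
  simp [genHarmonic]

lemma genHarmonic_succ (α : ℂ) (k : ℕ) :
    genHarmonic α (k + 1) = genHarmonic α k + α ^ (k + 1) / (k + 1) := by
  rw [genHarmonic, sum_Icc_succ_top (by omega), ← genHarmonic]
  push_cast
  rfl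

lemma sum_range_succ_choose_mul {R : Type*} [CommSemiring R] (f : ℕ → R) (n : ℕ) :
    ∑ k ∈ range (n + 2), ((n + 1).choose k : R) * f k =
      ∑ k ∈ range (n + 1), (n.choose k : R) * (f k + f (k + 1)) := by
  rw [sum_range_succ']
  simp only [Nat.choose_succ_succ, Nat.cast_add, add_mul, mul_add, sum_add_distrib]
  rw [sum_range_succ (fun k => (n.choose (k + 1) : R) * f (k + 1)),
    sum_range_succ' (fun k => (n.choose k : R) * f k)]
  simp only [Nat.choose_succ_self, Nat.choose_zero_right, Nat.cast_zero, zero_mul, add_zero]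
  abel

lemma sum_range_choose_mul_pow_succ_div {K : Type*} [Field K] [CharZero K] (x : K) (n : ℕ) :
    ∑ k ∈ range (n + 1), (n.choose k : K) * (x ^ (k + 1) / (k + 1)) =
      ((1 + x) ^ (n + 1) - 1) / (n + 1) := by
  rw [eq_div_iff n.cast_add_one_ne_zero, sum_mul]
  have hterm (k : ℕ) : (n.choose k : K) * (x ^ (k + 1) / (k + 1)) * (n + 1) =
      x ^ (k + 1) * ((n + 1).choose (k + 1) : K) := by
    have hchoose : ((n : K) + 1) * n.choose k = (n + 1).choose (k + 1) * (k + 1) := by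
      exact_mod_cast Nat.add_one_mul_choose_eq n k
    field_simp
    linear_combination x ^ (k + 1) * hchoose
  simp only [hterm]
  rw [add_comm 1 x, add_pow, sum_range_succ' _ (n + 1)]
  simp

lemma two_pow_mul_genHarmonic_sub_succ (α : ℂ) (n : ℕ) :
    2 ^ (n + 1) * (genHarmonic ((1 + α) / 2) (n + 1) - genHarmonic (1 / 2) (n + 1)) =
      2 * (2 ^ n * (genHarmonic ((1 + α) / 2) n - genHarmonic (1 / 2) n)) +
        ((1 + α) ^ (n + 1) - 1) / (n + 1) := by
  simp only [genHarmonic_succ, div_pow, one_pow]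
  field_simp
  ring

theorem stmt_12_general (α : ℂ) (n : ℕ) :
    ∑ k ∈ Finset.range (n + 1), (Nat.choose n k : ℂ) * genHarmonic α k =
      2 ^ n * (genHarmonic ((1 + α) / 2) n - genHarmonic (1 / 2) n) := by
  induction n with
  | zero => simp
  | succ n ih =>
    rw [sum_range_succ_choose_mul, two_pow_mul_genHarmonic_sub_succ, ← ih,
      ← sum_range_choose_mul_pow_succ_div, mul_sum, ← sum_add_distrib]
    refine sum_congr rfl fun k _ => ?_
    rw [genHarmonic_succ]
    ring

theorem stmt_12 (α : ℂ) (n : ℕ) (hn : 1 ≤ n) :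
    ∑ k ∈ Finset.range (n + 1), (Nat.choose n k : ℂ) * genHarmonic α k =
      2 ^ n * (genHarmonic ((1 + α) / 2) n - genHarmonic (1 / 2) n) :=
  stmt_12_general α n
end

section
/- Let n and p be natural numbers with 1 ≤ n and p < n, and let α ∈ ℂ. Then: Σ_{j=0}^n (−1)^j C(n,j) j^p H_j(α) = Σ_{l=0}^p Σ_{j=0}^p (−1)^l C(n,l) C(n−l, j−l) · j! · S(p,j) · ( (1 − α)^{n−l} − 1 ) / (n − l). -/
open Finset

/-- Stirling numbers of the second kind: `stirling2 p j` is the number of partitions of a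
`p`-element set into `j` nonempty blocks. -/
def stirling2 : ℕ → ℕ → ℕ
  | 0, 0 => 1
  | 0, _ + 1 => 0
  | _ + 1, 0 => 0
  | p + 1, j + 1 => (j + 1) * stirling2 p (j + 1) + stirling2 p j

lemma altsum_prefix (m : ℕ) : ∀ i : ℕ,
    ∑ j ∈ range (i+1), (-1:ℂ)^j * ((m+1).choose j : ℂ) = (-1)^i * (m.choose i : ℂ) := by
  intro i
  induction i with
  | zero => simp
  | succ i ih =>
    rw [Finset.sum_range_succ, ih, Nat.choose_succ_succ (m) (i)]
    push_cast
    ring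


lemma altsum_tail (m i : ℕ) (hi : 1 ≤ i) (him : i ≤ m + 1) :
    ∑ j ∈ Ico i (m+2), (-1:ℂ)^j * ((m+1).choose j : ℂ) = (-1)^i * (m.choose (i-1) : ℂ) := by
  have htot : ∑ j ∈ range (m+2), (-1:ℂ)^j * ((m+1).choose j : ℂ) = 0 := by
    have := altsum_prefix m (m+1)
    simpa [Nat.choose_succ_self] using this
  have hsplit : ∑ j ∈ range i, (-1:ℂ)^j * ((m+1).choose j : ℂ)
      + ∑ j ∈ Ico i (m+2), (-1:ℂ)^j * ((m+1).choose j : ℂ) = 0 := by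
    rw [← htot, Finset.range_eq_Ico]
    simpa only [Finset.range_eq_Ico] using Finset.sum_Ico_consecutive (fun j => (-1:ℂ)^j * ((m+1).choose j : ℂ)) (Nat.zero_le i) (show i ≤ m + 2 by omega)
  have hpre : ∑ j ∈ range i, (-1:ℂ)^j * ((m+1).choose j : ℂ)
      = (-1:ℂ)^(i-1) * (m.choose (i-1) : ℂ) := by
    obtain ⟨i', rfl⟩ : ∃ i', i = i' + 1 := ⟨i - 1, by omega⟩
    simpa using altsum_prefix m i'
  have h2 : (-1:ℂ)^i = -(-1:ℂ)^(i-1) := by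
    obtain ⟨i', rfl⟩ : ∃ i', i = i' + 1 := ⟨i - 1, by omega⟩
    simp [pow_succ]
  rw [hpre] at hsplit
  rw [h2]
  linear_combination hsplit


lemma base_identity (m : ℕ) (α : ℂ) :
    ∑ j ∈ range (m+2), (-1:ℂ)^j * ((m+1).choose j : ℂ) * genHarmonic α j
      = ((1-α)^(m+1) - 1) / ((m+1 : ℕ) : ℂ) := by
  have step1 : ∑ j ∈ range (m+2), (-1:ℂ)^j * ((m+1).choose j : ℂ) * genHarmonic α j
      = ∑ j ∈ range (m+2), ∑ i ∈ Icc 1 (m+1),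
          (if i ≤ j then (-1:ℂ)^j * ((m+1).choose j : ℂ) * (α^i / i) else 0) := by
    apply Finset.sum_congr rfl
    intro j hj
    rw [genHarmonic, Finset.mul_sum, ← Finset.sum_filter]
    apply Finset.sum_congr ?_ (fun _ _ => rfl)
    ext x
    simp only [Finset.mem_Icc, Finset.mem_filter]
    simp only [Finset.mem_range] at hj
    omega
  rw [step1, Finset.sum_comm]
  have step2 : ∀ i ∈ Icc 1 (m+1),
      (∑ j ∈ range (m+2), if i ≤ j then (-1:ℂ)^j * ((m+1).choose j : ℂ) * (α^i / i) else 0)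
      = (α^i / i) * ((-1:ℂ)^i * (m.choose (i-1) : ℂ)) := by
    intro i hi
    simp only [Finset.mem_Icc] at hi
    rw [← Finset.sum_filter]
    rw [show (range (m+2)).filter (fun j => i ≤ j) = Ico i (m+2) from by
      ext x; simp only [Finset.mem_filter, Finset.mem_range, Finset.mem_Ico]; omega]
    rw [← Finset.sum_mul, altsum_tail m i hi.1 hi.2]
    ring
  rw [Finset.sum_congr rfl step2]
  have hm1 : ((m:ℂ)+1) ≠ 0 := Nat.cast_add_one_ne_zero m
  have step3 : ∀ i ∈ Icc 1 (m+1),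
      (α^i / i) * ((-1:ℂ)^i * (m.choose (i-1) : ℂ))
      = (-α)^i * (((m+1).choose i : ℂ)) / ((m:ℂ)+1) := by
    intro i hi
    simp only [Finset.mem_Icc] at hi
    obtain ⟨i', rfl⟩ : ∃ i', i = i' + 1 := ⟨i - 1, by omega⟩
    have h := Nat.add_one_mul_choose_eq m i'
    have hc : ((m:ℂ)+1) * (m.choose i' : ℂ) = ((m+1).choose (i'+1) : ℂ) * ((i':ℂ)+1) := by
      exact_mod_cast congrArg (Nat.cast : ℕ → ℂ) h
    have hi0 : ((i':ℂ)+1) ≠ 0 := Nat.cast_add_one_ne_zero i'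
    field_simp
    push_cast
    ring_nf
    ring_nf at hc
    linear_combination (α^(i'+1) * (-1:ℂ)^(i'+1)) * hc
  rw [Finset.sum_congr rfl step3]
  have hpow : (1-α)^(m+1) = ∑ i ∈ range (m+2), (-α)^i * (((m+1).choose i : ℂ)) := by
    have := add_pow (-α) 1 (m+1)
    simp only [one_pow, mul_one] at this
    rw [show (1:ℂ) - α = -α + 1 by ring, this]
  have : ∑ i ∈ range (m+2), (-α)^i * (((m+1).choose i : ℂ)) / ((m:ℂ)+1)
      = (∑ i ∈ range (m+2), (-α)^i * (((m+1).choose i : ℂ))) / ((m:ℂ)+1) := by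
    rw [Finset.sum_div]
  have hsplit : ∑ i ∈ range (m+2), (-α)^i * (((m+1).choose i : ℂ)) / ((m:ℂ)+1)
      = (-α)^0 * (((m+1).choose 0 : ℂ)) / ((m:ℂ)+1)
        + ∑ i ∈ Icc 1 (m+1), (-α)^i * (((m+1).choose i : ℂ)) / ((m:ℂ)+1) := by
    rw [Finset.range_eq_Ico, ← Finset.sum_Ico_consecutive _ (Nat.zero_le 1) (by omega)]
    congr 1
    simp
  rw [show ∑ i ∈ Icc 1 (m+1), (-α)^i * (((m+1).choose i : ℂ)) / ((m:ℂ)+1)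
      = ∑ i ∈ range (m+2), (-α)^i * (((m+1).choose i : ℂ)) / ((m:ℂ)+1)
        - (-α)^0 * (((m+1).choose 0 : ℂ)) / ((m:ℂ)+1) from by rw [hsplit]; ring]
  rw [this, hpow]
  push_cast
  try field_simp
  try ring
  rw [Nat.choose_zero_right, Nat.cast_one]
  ring


lemma stirling2_eq_zero : ∀ p k : ℕ, p < k → stirling2 p k = 0 := by
  intro p
  induction p with
  | zero => intro k hk; obtain ⟨k', rfl⟩ : ∃ k', k = k' + 1 := ⟨k - 1, by omega⟩; rfl
  | succ p ih =>
    intro k hk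
    obtain ⟨k', rfl⟩ : ∃ k', k = k' + 1 := ⟨k - 1, by omega⟩
    show (k' + 1) * stirling2 p (k' + 1) + stirling2 p k' = 0
    rw [ih (k'+1) (by omega), ih k' (by omega)]
    ring


lemma pow_eq_sum_stirling (p : ℕ) : ∀ j : ℕ,
    ((j:ℂ))^p = ∑ k ∈ range (p+1),
      (stirling2 p k : ℂ) * (k.factorial : ℂ) * (j.choose k : ℂ) := by
  induction p with
  | zero => intro j; simp [stirling2]
  | succ p ih =>
    intro j
    have hjk : ∀ k : ℕ, (j:ℂ) * (j.choose k : ℂ)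
        = ((k:ℂ)+1) * (j.choose (k+1) : ℂ) + (k:ℂ) * (j.choose k : ℂ) := by
      intro k
      by_cases hk : k ≤ j
      · have h := Nat.choose_succ_right_eq j k
        have h' : (j.choose (k+1) : ℂ) * ((k:ℂ)+1) = (j.choose k : ℂ) * ((j:ℂ) - (k:ℂ)) := by
          have h2 := congrArg (Nat.cast : ℕ → ℂ) h
          push_cast at h2
          rw [h2, Nat.cast_sub hk]
        linear_combination -h'
      · have h1 : j.choose k = 0 := Nat.choose_eq_zero_of_lt (by omega)
        have h2 : j.choose (k+1) = 0 := Nat.choose_eq_zero_of_lt (by omega)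
        simp [h1, h2]
    have e1 : ((j:ℂ))^(p+1) = ∑ k ∈ range (p+1),
        ((stirling2 p k : ℂ) * ((k+1).factorial : ℂ) * (j.choose (k+1) : ℂ)
          + (stirling2 p k : ℂ) * (k.factorial : ℂ) * (k:ℂ) * (j.choose k : ℂ)) := by
      rw [pow_succ, mul_comm, ih j, Finset.mul_sum]
      apply Finset.sum_congr rfl
      intro k _
      rw [show (j:ℂ) * ((stirling2 p k : ℂ) * (k.factorial : ℂ) * (j.choose k : ℂ))
          = (stirling2 p k : ℂ) * (k.factorial : ℂ) * ((j:ℂ) * (j.choose k : ℂ)) from by ring,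
        hjk k]
      have hf : ((k+1).factorial : ℂ) = ((k:ℂ)+1) * (k.factorial : ℂ) := by
        rw [Nat.factorial_succ]; push_cast; ring
      rw [hf]; ring
    have target : ∑ k ∈ range (p+2),
        (stirling2 (p+1) k : ℂ) * (k.factorial : ℂ) * (j.choose k : ℂ)
        = ∑ k ∈ range (p+1),
            (((k:ℂ)+1) * (stirling2 p (k+1) : ℂ) * ((k+1).factorial : ℂ) * (j.choose (k+1) : ℂ)
              + (stirling2 p k : ℂ) * ((k+1).factorial : ℂ) * (j.choose (k+1) : ℂ)) := by
      rw [Finset.sum_range_succ']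
      have h0 : (stirling2 (p+1) 0 : ℂ) = 0 := by norm_num [stirling2]
      rw [h0]
      simp only [zero_mul, add_zero]
      apply Finset.sum_congr rfl
      intro k _
      have hrec : (stirling2 (p+1) (k+1) : ℂ)
          = ((k:ℂ)+1) * (stirling2 p (k+1) : ℂ) + (stirling2 p k : ℂ) := by
        show ((((k + 1) * stirling2 p (k + 1) + stirling2 p k : ℕ)) : ℂ) = _
        push_cast
        ring
      rw [hrec]; ring
    rw [e1, target, Finset.sum_add_distrib, Finset.sum_add_distrib]
    have main : ∑ k ∈ range (p+1),
        (stirling2 p k : ℂ) * (k.factorial : ℂ) * (k:ℂ) * (j.choose k : ℂ)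
        = ∑ k ∈ range (p+1),
            ((k:ℂ)+1) * (stirling2 p (k+1) : ℂ) * ((k+1).factorial : ℂ) * (j.choose (k+1) : ℂ) := by
      rw [Finset.sum_range_succ', Finset.sum_range_succ]
      rw [show (stirling2 p (p+1) : ℂ) = 0 from by rw [stirling2_eq_zero p (p+1) (by omega)]; simp]
      simp only [Nat.cast_zero, mul_zero, zero_mul, add_zero, zero_add, Nat.choose_zero_right]
      apply Finset.sum_congr rfl
      intro k _
      push_cast
      ring
    rw [main]
    ring


lemma diff_succ (x : ℕ → ℂ) (k : ℕ) :
    ∑ l ∈ range (k+2), (-1:ℂ)^l * ((k+1).choose l : ℂ) * x l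
      = ∑ l ∈ range (k+1), (-1:ℂ)^l * (k.choose l : ℂ) * (x l - x (l+1)) := by
  have hA : ∑ l ∈ range (k+1), (-1:ℂ)^l * (k.choose l : ℂ) * x l
      = x 0 + ∑ l ∈ range (k+1), (-1:ℂ)^(l+1) * (k.choose (l+1) : ℂ) * x (l+1) := by
    rw [Finset.sum_range_succ']
    rw [Finset.sum_range_succ (fun l => (-1:ℂ)^(l+1) * (k.choose (l+1) : ℂ) * x (l+1)) k]
    simp [Nat.choose_succ_self]
    ring
  have hL : ∑ l ∈ range (k+2), (-1:ℂ)^l * ((k+1).choose l : ℂ) * x l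
      = x 0 + ∑ l ∈ range (k+1),
          ((-1:ℂ)^(l+1) * (k.choose (l+1) : ℂ) * x (l+1)
            - (-1:ℂ)^l * (k.choose l : ℂ) * x (l+1)) := by
    rw [Finset.sum_range_succ']
    simp only [Nat.choose_succ_succ]
    push_cast
    rw [Finset.sum_congr rfl (fun l _ => show
        (-1:ℂ)^(l+1) * ((k.choose l : ℂ) + (k.choose (l+1) : ℂ)) * x (l+1)
        = (-1:ℂ)^(l+1) * (k.choose (l+1) : ℂ) * x (l+1)
          - (-1:ℂ)^l * (k.choose l : ℂ) * x (l+1) from by ring)]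
    simp
    ring
  rw [hL, Finset.sum_sub_distrib]
  rw [Finset.sum_congr rfl (fun l _ => show
      (-1:ℂ)^l * (k.choose l : ℂ) * (x l - x (l+1))
      = (-1:ℂ)^l * (k.choose l : ℂ) * x l - (-1:ℂ)^l * (k.choose l : ℂ) * x (l+1) from by ring),
    Finset.sum_sub_distrib, hA]
  ring


lemma altsum_choose : ∀ k n j : ℕ, k ≤ n →
    ∑ l ∈ range (k+1), (-1:ℂ)^l * (k.choose l : ℂ) * ((n-l).choose j : ℂ)
      = if k ≤ j then (((n-k).choose (j-k) : ℕ) : ℂ) else 0 := by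
  intro k
  induction k with
  | zero => intro n j _; simp
  | succ k ih =>
    intro n j hkn
    rw [diff_succ (fun l => ((n-l).choose j : ℂ)) k]
    rcases j with _ | j'
    · -- j = 0 : each difference is 0
      rw [Finset.sum_congr rfl (fun l hl => show
          (-1:ℂ)^l * (k.choose l : ℂ) * (((n-l).choose 0 : ℂ) - ((n-(l+1)).choose 0 : ℂ)) = 0
          from by simp)]
      simp
    · -- j = j' + 1
      have step : ∀ l ∈ range (k+1),
          (-1:ℂ)^l * (k.choose l : ℂ) * (((n-l).choose (j'+1) : ℂ) - ((n-(l+1)).choose (j'+1) : ℂ))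
          = (-1:ℂ)^l * (k.choose l : ℂ) * (((n-1-l).choose j' : ℂ)) := by
        intro l hl
        simp only [Finset.mem_range] at hl
        have h1 : n - l = (n - 1 - l) + 1 := by omega
        have h2 : n - (l+1) = n - 1 - l := by omega
        rw [h1, h2, Nat.choose_succ_succ]
        push_cast
        ring
      rw [Finset.sum_congr rfl step, ih (n-1) j' (by omega)]
      have h3 : n - 1 - k = n - (k+1) := by omega
      by_cases hkj : k ≤ j'
      · rw [if_pos hkj, if_pos (by omega : k + 1 ≤ j' + 1), h3]
        congr 2
        omega
      · rw [if_neg hkj, if_neg (by omega)]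


lemma core (n k : ℕ) (hk : k < n) (α : ℂ) :
    ∑ j ∈ range (n+1), (-1:ℂ)^j * (n.choose j : ℂ) * (j.choose k : ℂ) * genHarmonic α j
      = ∑ l ∈ range (k+1), (-1:ℂ)^l * (n.choose l : ℂ) * ((n-l).choose (k-l) : ℂ)
          * (((1-α)^(n-l) - 1) / ((n-l : ℕ) : ℂ)) := by
  have hRl : ∀ l ∈ range (k+1),
      (-1:ℂ)^l * (n.choose l : ℂ) * ((n-l).choose (k-l) : ℂ)
          * (((1-α)^(n-l) - 1) / ((n-l : ℕ) : ℂ))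
      = ∑ j ∈ range (n+1), (n.choose k : ℂ) * ((-1:ℂ)^j * genHarmonic α j)
          * ((-1:ℂ)^l * (k.choose l : ℂ) * (((n-l).choose j : ℕ) : ℂ)) := by
    intro l hl
    simp only [Finset.mem_range] at hl
    have hl' : l ≤ k := by omega
    have hchoose : (n.choose l : ℂ) * ((n-l).choose (k-l) : ℂ)
        = (n.choose k : ℂ) * (k.choose l : ℂ) := by
      have := Nat.choose_mul (n := n) hl'
      exact_mod_cast (congrArg (Nat.cast : ℕ → ℂ) this).symm
    have hnl : 1 ≤ n - l := by omega
    have hbase : ((1-α)^(n-l) - 1) / (((n-l : ℕ)) : ℂ)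
        = ∑ j ∈ range (n+1), (-1:ℂ)^j * (((n-l).choose j : ℕ) : ℂ) * genHarmonic α j := by
      obtain ⟨m, hm⟩ : ∃ m, n - l = m + 1 := ⟨n - l - 1, by omega⟩
      rw [hm]
      rw [← base_identity m α]
      apply Finset.sum_subset
      · intro x hx; simp only [Finset.mem_range] at *; omega
      · intro x _ hx
        simp only [Finset.mem_range] at hx
        rw [Nat.choose_eq_zero_of_lt (by omega)]
        simp
    rw [hbase, Finset.mul_sum]
    apply Finset.sum_congr rfl
    intro j _
    have : (-1:ℂ)^l * (n.choose l : ℂ) * ((n-l).choose (k-l) : ℂ)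
        = (-1:ℂ)^l * ((n.choose k : ℂ) * (k.choose l : ℂ)) := by rw [← hchoose]; ring
    rw [this]
    ring
  rw [Finset.sum_congr rfl hRl, Finset.sum_comm]
  apply Finset.sum_congr rfl
  intro j hj
  simp only [Finset.mem_range] at hj
  rw [← Finset.mul_sum, altsum_choose k n j (by omega)]
  by_cases hkj : k ≤ j
  · rw [if_pos hkj]
    have := Nat.choose_mul (n := n) hkj
    have hc : (n.choose j : ℂ) * (j.choose k : ℂ)
        = (n.choose k : ℂ) * (((n-k).choose (j-k) : ℕ) : ℂ) := by exact_mod_cast this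
    rw [show (-1:ℂ)^j * (n.choose j : ℂ) * (j.choose k : ℂ) * genHarmonic α j
        = ((n.choose j : ℂ) * (j.choose k : ℂ)) * ((-1:ℂ)^j * genHarmonic α j) from by ring, hc]
    ring
  · rw [if_neg hkj, Nat.choose_eq_zero_of_lt (by omega : j < k)]
    simp


theorem stmt_18 (n p : ℕ) (hn : 1 ≤ n) (hp : p < n) (α : ℂ) :
    ∑ j ∈ Finset.range (n + 1),
        (-1) ^ j * (Nat.choose n j : ℂ) * (j : ℂ) ^ p * genHarmonic α j =
      ∑ l ∈ Finset.range (p + 1), ∑ j ∈ Finset.range (p + 1),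
        (-1) ^ l * (Nat.choose n l : ℂ) *
          (if l ≤ j then (Nat.choose (n - l) (j - l) : ℂ) else 0) *
          (Nat.factorial j : ℂ) * (stirling2 p j : ℂ) *
          ((1 - α) ^ (n - l) - 1) / ((n - l : ℕ) : ℂ) := by
  -- LHS transformation
  have lhs_eq : ∑ j ∈ Finset.range (n + 1),
      (-1:ℂ) ^ j * (Nat.choose n j : ℂ) * (j : ℂ) ^ p * genHarmonic α j
      = ∑ k ∈ range (p+1), (stirling2 p k : ℂ) * (k.factorial : ℂ) *
          ∑ j ∈ range (n+1), (-1:ℂ)^j * (n.choose j : ℂ) * (j.choose k : ℂ) * genHarmonic α j := by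
    have e : ∀ j ∈ range (n+1),
        (-1:ℂ) ^ j * (Nat.choose n j : ℂ) * (j : ℂ) ^ p * genHarmonic α j
        = ∑ k ∈ range (p+1), (stirling2 p k : ℂ) * (k.factorial : ℂ) *
            ((-1:ℂ)^j * (n.choose j : ℂ) * (j.choose k : ℂ) * genHarmonic α j) := by
      intro j _
      rw [show (-1:ℂ) ^ j * (Nat.choose n j : ℂ) * (j : ℂ) ^ p * genHarmonic α j
          = ((j:ℂ)^p) * ((-1:ℂ)^j * (n.choose j : ℂ) * genHarmonic α j) from by ring,
        pow_eq_sum_stirling p j, Finset.sum_mul]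
      apply Finset.sum_congr rfl
      intro k _
      ring
    rw [Finset.sum_congr rfl e, Finset.sum_comm]
    apply Finset.sum_congr rfl
    intro k _
    rw [Finset.mul_sum]
  rw [lhs_eq, Finset.sum_comm]
  apply Finset.sum_congr rfl
  intro k hk
  simp only [Finset.mem_range] at hk
  have hkn : k < n := by omega
  rw [core n k hkn α]
  -- now handle the RHS inner sum over l
  have trunc : ∑ l ∈ Finset.range (p + 1),
      (-1:ℂ) ^ l * (Nat.choose n l : ℂ) *
        (if l ≤ k then (Nat.choose (n - l) (k - l) : ℂ) else 0) *
        (Nat.factorial k : ℂ) * (stirling2 p k : ℂ) *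
        ((1 - α) ^ (n - l) - 1) / ((n - l : ℕ) : ℂ)
      = ∑ l ∈ Finset.range (k + 1),
      (-1:ℂ) ^ l * (Nat.choose n l : ℂ) *
        (if l ≤ k then (Nat.choose (n - l) (k - l) : ℂ) else 0) *
        (Nat.factorial k : ℂ) * (stirling2 p k : ℂ) *
        ((1 - α) ^ (n - l) - 1) / ((n - l : ℕ) : ℂ) := by
    symm
    apply Finset.sum_subset
    · intro x hx; simp only [Finset.mem_range] at *; omega
    · intro x _ hx
      simp only [Finset.mem_range] at hx
      rw [if_neg (by omega)]
      simp
  rw [trunc, Finset.mul_sum]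
  apply Finset.sum_congr rfl
  intro l hl
  simp only [Finset.mem_range] at hl
  rw [if_pos (by omega : l ≤ k)]
  ring
end
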